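/- Let m ≥ 1 and i ≥ 2 be integers. Let (Ω, F, ℙ) be a probability space with a filtration (F_t)_{t≥i} and let (d_t)_{t≥i} be an adapted, integrable, nonnegative process such that for every t ≥ i, E[d_{t+1} | F_t] = d_t·(1 - e_t) + m·c_t almost surely. Then for every fixed real s > 1, d_t / ( ∑_{l=i}^{t-1} ln(1 + c_l) )^s → 0 almost surely as t → ∞. -/

import Mathlib

/-!
Fix `1 < p < s` and let `S t = ∑_{l=i}^{t-1} ln(1 + c_l)`. As `e_t ≥ 0` and `d ≥ 0`, the drift
satisfies `E[d_{t+1} | F_t] ≤ d_t + m c_t`, so (Robbins–Siegmund)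
`d_t / S_t^p + ∑_{j ≥ t} m c_j / S_{j+1}^p` is a nonnegative supermartingale, provided the
tail series converges. It does: `c_t ≤ (m + 2) (S_{t+1} - S_t)`, and
`∑ (S_{t+1} - S_t) / S_{t+1}^p` is dominated by `∫ x^{-p} dx < ∞`. Hence `d_t / S_t^p`
converges almost surely, and since `S_t ≥ ln t - ln i → ∞`,
`d_t / S_t^s = (d_t / S_t^p) S_t^{p-s} → 0`.
-/

open Filter MeasureTheory

noncomputable def cPAAPA (m l : ℕ) : ℝ :=
  (2 * (m : ℝ) * l + 1) / ((l : ℝ) * (2 * (m : ℝ) * l + 1 - 2 * m))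

noncomputable def ePAAPA (m l : ℕ) : ℝ :=
  (m : ℝ) / ((l : ℝ) * (2 * (m : ℝ) * l + 1 - 2 * m))

open scoped Topology

lemma sub_div_rpow_le {a b p : ℝ} (ha : 0 < a) (hab : a ≤ b) (hp : 1 < p) :
    (b - a) / b ^ p ≤ (a ^ (1 - p) - b ^ (1 - p)) / (p - 1) := by
  have hb : 0 < b := ha.trans_le hab
  have hA : 0 < a ^ p := Real.rpow_pos_of_pos ha p
  have hB : 0 < b ^ p := Real.rpow_pos_of_pos hb p
  have bernoulli : a ^ p * (1 + p * (b / a - 1)) ≤ b ^ p := by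
    calc a ^ p * (1 + p * (b / a - 1))
        ≤ a ^ p * (1 + (b / a - 1)) ^ p := by
          gcongr
          exact one_add_mul_self_le_rpow_one_add
            (by linarith [div_nonneg hb.le ha.le]) hp.le
      _ = b ^ p := by
          rw [add_sub_cancel, Real.div_rpow hb.le ha.le, mul_div_cancel₀ _ hA.ne']
  have key : a * a ^ p + p * a ^ p * (b - a) ≤ a * b ^ p := by
    have h := mul_le_mul_of_nonneg_left bernoulli ha.le
    have e : a * (a ^ p * (1 + p * (b / a - 1))) = a * a ^ p + p * a ^ p * (b - a) := by
      field_simp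
    linarith
  rw [Real.rpow_sub ha, Real.rpow_sub hb, Real.rpow_one, Real.rpow_one,
    div_le_div_iff₀ hB (by linarith), div_sub_div _ _ hA.ne' hB.ne', div_mul_eq_mul_div,
    le_div_iff₀ (by positivity)]
  nlinarith [mul_le_mul_of_nonneg_right key hB.le]

lemma summable_sub_div_rpow_of_monotone {S : ℕ → ℝ} (hS : Monotone S) (h0 : 0 < S 0)
    {p : ℝ} (hp : 1 < p) : Summable fun t => (S (t + 1) - S t) / S (t + 1) ^ p := by
  have hpos : ∀ t, 0 < S t := fun t => h0.trans_le (hS (Nat.zero_le t))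
  refine summable_of_sum_range_le (c := S 0 ^ (1 - p) / (p - 1))
    (fun t => div_nonneg (sub_nonneg.2 (hS t.le_succ)) (Real.rpow_nonneg (hpos _).le _))
    fun n => ?_
  calc ∑ t ∈ Finset.range n, (S (t + 1) - S t) / S (t + 1) ^ p
      ≤ ∑ t ∈ Finset.range n, (S t ^ (1 - p) - S (t + 1) ^ (1 - p)) / (p - 1) :=
        Finset.sum_le_sum fun t _ => sub_div_rpow_le (hpos t) (hS t.le_succ) hp
    _ = (S 0 ^ (1 - p) - S n ^ (1 - p)) / (p - 1) := by
        rw [← Finset.sum_div, Finset.sum_range_sub']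
    _ ≤ S 0 ^ (1 - p) / (p - 1) :=
        div_le_div_of_nonneg_right (sub_le_self _ (Real.rpow_nonneg (hpos n).le _))
          (by linarith)

lemma tendsto_div_rpow_zero {α : Type*} {l : Filter α} {f S : α → ℝ} {c p s : ℝ}
    (hf : Tendsto (fun x => f x / S x ^ p) l (𝓝 c)) (hS : Tendsto S l atTop) (hps : p < s) :
    Tendsto (fun x => f x / S x ^ s) l (𝓝 0) := by
  have hpow : Tendsto (fun x => S x ^ (p - s)) l (𝓝 0) := by
    simpa [Function.comp_def] using (tendsto_rpow_neg_atTop (sub_pos.2 hps)).comp hS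
  refine (mul_zero c ▸ hf.mul hpow).congr' ?_
  filter_upwards [hS.eventually_gt_atTop 0] with x hx
  rw [Real.rpow_sub hx]
  field_simp

section Coefficients

variable (m : ℕ)

lemma paapa_denominator_pos {l : ℕ} (hl : 1 ≤ l) :
    0 < (l : ℝ) * (2 * (m : ℝ) * l + 1 - 2 * m) := by
  have hl' : (1 : ℝ) ≤ l := by exact_mod_cast hl
  have : 0 ≤ 2 * (m : ℝ) * (l - 1) := mul_nonneg (by positivity) (by linarith)
  nlinarith

lemma paapa_denominator_nonneg (l : ℕ) : 0 ≤ (l : ℝ) * (2 * (m : ℝ) * l + 1 - 2 * m) := by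
  rcases Nat.eq_zero_or_pos l with rfl | hl
  · simp
  · exact (paapa_denominator_pos m hl).le

lemma cPAAPA_nonneg (l : ℕ) : 0 ≤ cPAAPA m l :=
  div_nonneg (by positivity) (paapa_denominator_nonneg m l)

lemma ePAAPA_nonneg (l : ℕ) : 0 ≤ ePAAPA m l :=
  div_nonneg (by positivity) (paapa_denominator_nonneg m l)

lemma inv_le_cPAAPA (l : ℕ) : (l : ℝ)⁻¹ ≤ cPAAPA m l := by
  rcases Nat.eq_zero_or_pos l with rfl | hl
  · simp [cPAAPA]
  have hl' : (1 : ℝ) ≤ l := by exact_mod_cast hl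
  rw [cPAAPA, inv_eq_one_div, div_le_div_iff₀ (by positivity) (paapa_denominator_pos m hl)]
  nlinarith

lemma cPAAPA_le (l : ℕ) : cPAAPA m l ≤ 2 * m + 1 := by
  rcases Nat.eq_zero_or_pos l with rfl | hl
  · simp [cPAAPA]
    positivity
  have hl' : (1 : ℝ) ≤ l := by exact_mod_cast hl
  have : 0 ≤ 2 * (m : ℝ) * (l - 1) := mul_nonneg (by positivity) (by linarith)
  rw [cPAAPA, div_le_iff₀ (paapa_denominator_pos m hl)]
  nlinarith

lemma log_one_add_cPAAPA_nonneg (l : ℕ) : 0 ≤ Real.log (1 + cPAAPA m l) :=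
  Real.log_nonneg (by linarith [cPAAPA_nonneg m l])

lemma cPAAPA_le_mul_log (l : ℕ) : cPAAPA m l ≤ (m + 2) * Real.log (1 + cPAAPA m l) := by
  have hc := cPAAPA_nonneg m l
  have hlog := Real.le_log_one_add_of_nonneg hc
  rw [div_le_iff₀ (by linarith)] at hlog
  nlinarith [cPAAPA_le m l, Real.log_nonneg (by linarith : (1 : ℝ) ≤ 1 + cPAAPA m l)]

lemma log_succ_sub_log_le_log_one_add_cPAAPA (l : ℕ) :
    Real.log (l + 1) - Real.log l ≤ Real.log (1 + cPAAPA m l) := by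
  rcases Nat.eq_zero_or_pos l with rfl | hl
  · simp [cPAAPA]
  have hl' : (0 : ℝ) < l := by exact_mod_cast hl
  rw [← Real.log_div (by positivity) hl'.ne', add_div, div_self hl'.ne', one_div, add_comm]
  exact Real.log_le_log (by positivity) (by linarith [inv_le_cPAAPA m l])

end Coefficients

noncomputable def cLogSum (m i t : ℕ) : ℝ :=
  ∑ l ∈ Finset.Ico i t, Real.log (1 + cPAAPA m l)

namespace cLogSum

variable (m i : ℕ)

lemma nonneg (t : ℕ) : 0 ≤ cLogSum m i t :=
  Finset.sum_nonneg fun l _ => log_one_add_cPAAPA_nonneg m l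

lemma monotone : Monotone (cLogSum m i) := fun _ _ h =>
  Finset.sum_le_sum_of_subset_of_nonneg (Finset.Ico_subset_Ico le_rfl h)
    fun l _ _ => log_one_add_cPAAPA_nonneg m l

lemma succ {t : ℕ} (ht : i ≤ t) :
    cLogSum m i (t + 1) = cLogSum m i t + Real.log (1 + cPAAPA m t) :=
  Finset.sum_Ico_succ_top ht _

-- `cPAAPA m 0 = 0` (division by zero), so the first positive term is `l = i + 1`.
lemma pos {t : ℕ} (ht : i + 2 ≤ t) : 0 < cLogSum m i t := by
  refine Finset.sum_pos' (fun l _ => log_one_add_cPAAPA_nonneg m l)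
    ⟨i + 1, Finset.mem_Ico.2 ⟨by omega, by omega⟩, Real.log_pos ?_⟩
  have hc := inv_le_cPAAPA m (i + 1)
  have hinv : (0 : ℝ) < ((i + 1 : ℕ) : ℝ)⁻¹ := by positivity
  linarith

lemma log_sub_log_le {t : ℕ} (ht : i ≤ t) : Real.log t - Real.log i ≤ cLogSum m i t := by
  calc Real.log t - Real.log i = ∑ l ∈ Finset.Ico i t, (Real.log (l + 1) - Real.log l) := by
        have := Finset.sum_Ico_sub (fun l : ℕ => Real.log l) ht
        push_cast at this
        exact this.symm
    _ ≤ cLogSum m i t :=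
        Finset.sum_le_sum fun l _ => log_succ_sub_log_le_log_one_add_cPAAPA m l

lemma tendsto_atTop : Tendsto (cLogSum m i) atTop atTop := by
  refine tendsto_atTop_mono' atTop (eventually_atTop.2 ⟨i, fun t ht => log_sub_log_le m i ht⟩) ?_
  exact tendsto_atTop_add_const_right _ _
    (Real.tendsto_log_atTop.comp tendsto_natCast_atTop_atTop)

lemma summable_cPAAPA_div_rpow {p : ℝ} (hp : 1 < p) :
    Summable fun t => m * cPAAPA m t / cLogSum m i (t + 1) ^ p := by
  rw [← summable_nat_add_iff (i + 2)]
  have hS := summable_sub_div_rpow_of_monotone (S := fun t => cLogSum m i (t + (i + 2)))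
    (fun _ _ h => monotone m i (by omega)) (pos m i (by omega)) hp
  refine Summable.of_nonneg_of_le (fun t => ?_) (fun t => ?_) (hS.mul_left ((m : ℝ) * (m + 2)))
  · have hc := cPAAPA_nonneg m (t + (i + 2))
    have hS := nonneg m i (t + (i + 2) + 1)
    positivity
  · have hdiff : cLogSum m i (t + (i + 2) + 1) - cLogSum m i (t + (i + 2))
        = Real.log (1 + cPAAPA m (t + (i + 2))) := by
      rw [succ m i (by omega)]
      ring
    have hpow := Real.rpow_pos_of_pos (pos m i (t := t + (i + 2) + 1) (by omega)) p
    rw [Nat.add_right_comm t 1, hdiff, mul_div_assoc', mul_assoc]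
    gcongr
    exact cPAAPA_le_mul_log m _

end cLogSum

namespace MeasureTheory

variable {Ω : Type*} {m0 : MeasurableSpace Ω} {μ : Measure Ω}

def Filtration.shift (ℱ : Filtration ℕ m0) (n : ℕ) : Filtration ℕ m0 :=
  ⟨fun k => ℱ (k + n), fun _ _ h => ℱ.mono (by omega), fun _ => ℱ.le _⟩

@[simp]
lemma Filtration.shift_apply (ℱ : Filtration ℕ m0) (n k : ℕ) : ℱ.shift n k = ℱ (k + n) := rfl

variable [IsFiniteMeasure μ] {ℱ : Filtration ℕ m0}

theorem Supermartingale.exists_ae_tendsto_of_nonneg {f : ℕ → Ω → ℝ}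
    (hf : Supermartingale f ℱ μ) (hnonneg : ∀ n, 0 ≤ᵐ[μ] f n) :
    ∀ᵐ ω ∂μ, ∃ c, Tendsto (fun n => f n ω) atTop (𝓝 c) := by
  have hbdd : ∀ n, eLpNorm ((-f) n) 1 μ ≤ (∫ ω, f 0 ω ∂μ).toNNReal := by
    intro n
    have hnorm : ∫ ω, ‖f n ω‖ ∂μ = ∫ ω, f n ω ∂μ :=
      integral_congr_ae ((hnonneg n).mono fun ω hω => Real.norm_of_nonneg hω)
    have hle : ∫ ω, f n ω ∂μ ≤ ∫ ω, f 0 ω ∂μ := by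
      simpa using hf.setIntegral_le (Nat.zero_le n) MeasurableSet.univ
    rw [Pi.neg_apply, eLpNorm_neg, eLpNorm_one_eq_lintegral_enorm,
      ← ofReal_integral_norm_eq_lintegral_enorm (hf.integrable n), hnorm, ENNReal.ofReal]
    exact_mod_cast Real.toNNReal_le_toNNReal hle
  filter_upwards [hf.neg.exists_ae_tendsto_of_bdd hbdd] with ω ⟨c, hc⟩
  exact ⟨-c, by simpa using hc.neg⟩

variable {d : ℕ → Ω → ℝ} {b w : ℕ → ℝ}

theorem supermartingale_div_add_tsum (hd : Adapted ℱ d) (hint : ∀ t, Integrable (d t) μ)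
    (hnonneg : ∀ t, 0 ≤ᵐ[μ] d t) (hw : Monotone w) (hw0 : 0 < w 0)
    (hsum : Summable fun t => b t / w (t + 1))
    (hcond : ∀ t, μ[d (t + 1)|ℱ t] ≤ᵐ[μ] fun ω => d t ω + b t) :
    Supermartingale (fun t ω => d t ω / w t + ∑' j, b (j + t) / w (j + t + 1)) ℱ μ := by
  set R : ℕ → ℝ := fun t => ∑' j, b (j + t) / w (j + t + 1)
  have hR : ∀ t, R t = b t / w (t + 1) + R (t + 1) := by
    intro t
    simp only [R]
    rw [((summable_nat_add_iff t).2 hsum).tsum_eq_zero_add]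
    simp only [zero_add, Nat.add_right_comm _ 1 t, add_assoc]
  have hwpos : ∀ t, 0 < w t := fun t => hw0.trans_le (hw (Nat.zero_le t))
  refine supermartingale_nat (fun t => ?_) (fun t => ((hint t).div_const _).add
    (integrable_const _)) fun t => ?_
  · exact (((hd t).div_const _).add measurable_const).stronglyMeasurable
  have hcondExp : μ[fun ω => d (t + 1) ω / w (t + 1) + R (t + 1)|ℱ t]
      =ᵐ[μ] fun ω => (μ[d (t + 1)|ℱ t]) ω / w (t + 1) + R (t + 1) := by
    have hsmul : (fun ω => d (t + 1) ω / w (t + 1)) = (w (t + 1))⁻¹ • d (t + 1) := by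
      ext ω
      simp [div_eq_inv_mul]
    refine (condExp_add ((hint _).div_const _) (integrable_const _) _).trans ?_
    rw [condExp_const (ℱ.le _), hsmul]
    filter_upwards [condExp_smul (μ := μ) (w (t + 1))⁻¹ (d (t + 1)) (ℱ t)] with ω hω
    rw [Pi.add_apply, hω, Pi.smul_apply, smul_eq_mul, div_eq_inv_mul]
  filter_upwards [hcondExp, hcond t, hnonneg t] with ω hω hcondω hdω
  change _ ≤ d t ω / w t + R t
  rw [hω, hR t]
  have hdiv : d t ω / w (t + 1) ≤ d t ω / w t :=
    div_le_div_of_nonneg_left hdω (hwpos t) (hw t.le_succ)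
  have hstep : (μ[d (t + 1)|ℱ t]) ω / w (t + 1) ≤ d t ω / w (t + 1) + b t / w (t + 1) := by
    rw [← add_div]
    exact div_le_div_of_nonneg_right hcondω (hwpos (t + 1)).le
  linarith

theorem ae_exists_tendsto_div_of_condExp_le_add (hd : Adapted ℱ d)
    (hint : ∀ t, Integrable (d t) μ) (hnonneg : ∀ t, 0 ≤ᵐ[μ] d t) (hw : Monotone w)
    (hw0 : 0 < w 0) (hb : ∀ t, 0 ≤ b t) (hsum : Summable fun t => b t / w (t + 1))
    (hcond : ∀ t, μ[d (t + 1)|ℱ t] ≤ᵐ[μ] fun ω => d t ω + b t) :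
    ∀ᵐ ω ∂μ, ∃ c, Tendsto (fun t => d t ω / w t) atTop (𝓝 c) := by
  have hwpos : ∀ t, 0 < w t := fun t => hw0.trans_le (hw (Nat.zero_le t))
  have hX := supermartingale_div_add_tsum hd hint hnonneg hw hw0 hsum hcond
  have hXnonneg : ∀ t, 0 ≤ᵐ[μ] fun ω => d t ω / w t + ∑' j, b (j + t) / w (j + t + 1) := by
    intro t
    filter_upwards [hnonneg t] with ω hω
    exact add_nonneg (div_nonneg hω (hwpos t).le)
      (tsum_nonneg fun j => div_nonneg (hb _) (hwpos _).le)
  have htail : Tendsto (fun t => ∑' j, b (j + t) / w (j + t + 1)) atTop (𝓝 0) :=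
    tendsto_sum_nat_add fun t => b t / w (t + 1)
  filter_upwards [hX.exists_ae_tendsto_of_nonneg hXnonneg] with ω ⟨c, hc⟩
  exact ⟨c, by simpa using hc.sub htail⟩

theorem ae_exists_tendsto_div_of_eventually_condExp_le_add {n : ℕ} (hd : Adapted ℱ d)
    (hint : ∀ t, Integrable (d t) μ) (hnonneg : ∀ t, 0 ≤ᵐ[μ] d t) (hw : Monotone w)
    (hwn : 0 < w n) (hb : ∀ t, n ≤ t → 0 ≤ b t) (hsum : Summable fun t => b t / w (t + 1))
    (hcond : ∀ t, n ≤ t → μ[d (t + 1)|ℱ t] ≤ᵐ[μ] fun ω => d t ω + b t) :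
    ∀ᵐ ω ∂μ, ∃ c, Tendsto (fun t => d t ω / w t) atTop (𝓝 c) := by
  have hshift := ae_exists_tendsto_div_of_condExp_le_add (ℱ := ℱ.shift n)
    (d := fun t => d (t + n)) (b := fun t => b (t + n)) (w := fun t => w (t + n))
    (fun t => hd (t + n)) (fun _ => hint _) (fun _ => hnonneg _)
    (fun _ _ h => hw (by omega)) (by simpa using hwn) (fun t => hb _ (by omega))
    (by simpa [Nat.add_right_comm _ 1 n] using (summable_nat_add_iff n).2 hsum)
    (fun t => by simpa [Nat.add_right_comm _ 1 n] using hcond (t + n) (by omega))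
  filter_upwards [hshift] with ω ⟨c, hc⟩
  exact ⟨c, (tendsto_add_atTop_iff_nat n).1 hc⟩

end MeasureTheory

theorem pa_apa_pure_anti_degree_slower_than_log_pow_general
    {Ω : Type*} {m0 : MeasurableSpace Ω} (μ : Measure Ω) [IsProbabilityMeasure μ]
    (ℱ : Filtration ℕ m0) (m i : ℕ)
    (d : ℕ → Ω → ℝ) (hadapted : Adapted ℱ d)
    (hint : ∀ t, Integrable (d t) μ)
    (hnonneg : ∀ t, 0 ≤ᵐ[μ] d t)
    (hcond : ∀ t, i ≤ t →
      μ[d (t + 1) | ℱ t] =ᵐ[μ]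
        fun ω => d t ω * (1 - ePAAPA m t) + (m : ℝ) * cPAAPA m t) :
    ∀ s : ℝ, 1 < s →
      ∀ᵐ ω ∂μ, Tendsto (fun t : ℕ =>
          d t ω / (∑ l ∈ Finset.Ico i t, Real.log (1 + cPAAPA m l)) ^ s)
        atTop (nhds 0) := by
  intro s hs
  obtain ⟨p, hp, hps⟩ := exists_between hs
  have hdrift : ∀ t, i ≤ t →
      μ[d (t + 1) | ℱ t] ≤ᵐ[μ] fun ω => d t ω + m * cPAAPA m t := by
    intro t ht
    filter_upwards [hcond t ht, hnonneg t] with ω hω hdω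
    rw [hω]
    nlinarith [ePAAPA_nonneg m t, show 0 ≤ d t ω from hdω]
  have hconv := ae_exists_tendsto_div_of_eventually_condExp_le_add (n := i + 2)
    (w := fun t => cLogSum m i t ^ p) hadapted hint hnonneg
    (fun _ _ h => Real.rpow_le_rpow (cLogSum.nonneg m i _) (cLogSum.monotone m i h) (by linarith))
    (Real.rpow_pos_of_pos (cLogSum.pos m i le_rfl) p)
    (fun t _ => mul_nonneg (Nat.cast_nonneg m) (cPAAPA_nonneg m t))
    (cLogSum.summable_cPAAPA_div_rpow m i hp) fun t ht => hdrift t (by omega)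
  filter_upwards [hconv] with ω ⟨c, hc⟩
  exact tendsto_div_rpow_zero hc (cLogSum.tendsto_atTop m i) hps

/-- Theorem 3.9 of the paper: in the pure anti-preferential attachment model the degree of
each vertex grows more slowly than `(∑_{l=i}^{t-1} ln(1+c_l))^s ∼ ln^s t` for every `s > 1`,
almost surely. -/
theorem pa_apa_pure_anti_degree_slower_than_log_pow
    {Ω : Type*} {m0 : MeasurableSpace Ω} (μ : Measure Ω) [IsProbabilityMeasure μ]
    (ℱ : Filtration ℕ m0) (m i : ℕ) (hm : 1 ≤ m) (hi : 2 ≤ i)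
    (d : ℕ → Ω → ℝ) (hadapted : Adapted ℱ d)
    (hint : ∀ t, Integrable (d t) μ)
    (hnonneg : ∀ t, 0 ≤ᵐ[μ] d t)
    (hcond : ∀ t, i ≤ t →
      μ[d (t + 1) | ℱ t] =ᵐ[μ]
        fun ω => d t ω * (1 - ePAAPA m t) + (m : ℝ) * cPAAPA m t) :
    ∀ s : ℝ, 1 < s →
      ∀ᵐ ω ∂μ, Tendsto (fun t : ℕ =>
          d t ω / (∑ l ∈ Finset.Ico i t, Real.log (1 + cPAAPA m l)) ^ s)
        atTop (nhds 0) :=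
  pa_apa_pure_anti_degree_slower_than_log_pow_general μ ℱ m i d hadapted hint hnonneg hcond
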